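/- arXiv:1111.3546 — 3 statements merged into one kernel-verified Lean document; each statement's English description precedes it below -/
import Mathlib

section
/- The symmetric bilinear form on the lattice Λ_n is nondegenerate of signature (1, n) over the reals: the real vector space Λ_n ⊗ ℝ admits an orthogonal basis consisting of one vector of positive square and n vectors of negative square. -/
open Finset

/-- Index type for the standard basis of the lattice `Λ_n` (of rank `n+1 = p+q+r-1`):
`Sum.inl i` corresponds to `h_{i+1}` (`0 ≤ i ≤ p-2`) and `Sum.inr j` to `e_{j+1}`
(`0 ≤ j ≤ q+r-1`). -/
abbrev Idx (p q r : ℕ) : Type := Fin (p - 1) ⊕ Fin (q + r)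

/-- The Gram matrix of the inner product of `Λ_n` in the standard basis:
`h_i·h_i = r-2`, `h_i·h_j = r-1` (`i ≠ j`), `h_i·e_j = 0`, `e_j·e_j = -1`,
`e_i·e_j = 0` (`i ≠ j`). -/
def gram (p q r : ℕ) : Idx p q r → Idx p q r → ℤ
  | Sum.inl i, Sum.inl j => if i = j then (r : ℤ) - 2 else (r : ℤ) - 1
  | Sum.inr i, Sum.inr j => if i = j then -1 else 0
  | _, _ => 0

/-- The symmetric bilinear form ("inner product") on `Λ_n ⊗ R`. -/
def bform {R : Type*} [CommRing R] (p q r : ℕ) (x y : Idx p q r → R) : R :=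
  ∑ i : Idx p q r, ∑ j : Idx p q r, x i * y j * ((gram p q r i j : ℤ) : R)

/-- The basis vector `h_{i+1}` of `Λ_n`. -/
def hvec (p q r : ℕ) (i : Fin (p - 1)) : Idx p q r → ℤ :=
  fun k => if k = Sum.inl i then 1 else 0

/-- The basis vector `e_{j+1}` of `Λ_n`. -/
def evec (p q r : ℕ) (j : Fin (q + r)) : Idx p q r → ℤ :=
  fun k => if k = Sum.inr j then 1 else 0

/-- `κ = r·∑ h_i − ((p−1)(r−1)−1)·∑ e_j`. -/
def kappa (p q r : ℕ) : Idx p q r → ℤ :=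
  (r : ℤ) • ∑ i, hvec p q r i - (((p : ℤ) - 1) * ((r : ℤ) - 1) - 1) • ∑ j, evec p q r j

lemma bform_add_left {R : Type*} [CommRing R] (p q r : ℕ) (x x' y : Idx p q r → R) :
    bform p q r (x + x') y = bform p q r x y + bform p q r x' y := by
  simp [bform, add_mul, Finset.sum_add_distrib]

lemma bform_smul_left {R : Type*} [CommRing R] (p q r : ℕ) (c : R) (x y : Idx p q r → R) :
    bform p q r (c • x) y = c * bform p q r x y := by
  unfold bform
  rw [Finset.mul_sum]
  refine Finset.sum_congr rfl fun i _ => ?_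
  rw [Finset.mul_sum]
  refine Finset.sum_congr rfl fun j _ => ?_
  simp only [Pi.smul_apply, smul_eq_mul]
  ring

/-- The reflection `r_α : x ↦ x + (x·α)α`, as a `ℤ`-linear endomorphism of `Λ_n`. -/
def reflectL (p q r : ℕ) (α : Idx p q r → ℤ) : Module.End ℤ (Idx p q r → ℤ) where
  toFun x := x + bform p q r x α • α
  map_add' x y := by
    simp only [bform_add_left, add_smul]
    abel
  map_smul' c x := by
    simp only [bform_smul_left, smul_eq_mul, RingHom.id_apply, mul_smul, smul_add]

/-- The root lattice `L_n = κ^⊥ ∩ Λ_n`, as a `ℤ`-submodule of `Λ_n`. -/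
def Lsub (p q r : ℕ) : Submodule ℤ (Idx p q r → ℤ) where
  carrier := { x | bform p q r x (kappa p q r) = 0 }
  add_mem' := by
    intro a b ha hb
    simp only [Set.mem_setOf_eq] at ha hb ⊢
    rw [bform_add_left, ha, hb, add_zero]
  zero_mem' := by
    simp [Set.mem_setOf_eq, bform]
  smul_mem' := by
    intro c x hx
    simp only [Set.mem_setOf_eq] at hx ⊢
    rw [bform_smul_left, hx, mul_zero]

/-- The simple root `α_0 = h_1 − ∑_{i=1}^{r} e_i`. -/
def alpha0 (p q r : ℕ) : Idx p q r → ℤ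
  | Sum.inl i => if (i : ℕ) = 0 then 1 else 0
  | Sum.inr j => if (j : ℕ) < r then -1 else 0

/-- The set of simple roots `β_1, …, β_{p−2}, α_0, α_1, …, α_{q+r−1}`. -/
def simpleRootSet (p q r : ℕ) : Set (Idx p q r → ℤ) :=
  { α | (∃ i j : Fin (p - 1), (j : ℕ) = (i : ℕ) + 1 ∧ α = -hvec p q r i + hvec p q r j) ∨
        α = alpha0 p q r ∨
        (∃ i j : Fin (q + r), (j : ℕ) = (i : ℕ) + 1 ∧ α = evec p q r i - evec p q r j) }

/-- The Weyl group `W(T_{p,q,r})`, generated by the reflections in the simple roots.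
(Each generating reflection is an involution, so this multiplicatively closed set is
in fact a group of automorphisms of `Λ_n`.) -/
def weylGroup (p q r : ℕ) : Submonoid (Module.End ℤ (Idx p q r → ℤ)) :=
  Submonoid.closure { w | ∃ α ∈ simpleRootSet p q r, w = reflectL p q r α }

/-- The set of roots `Δ_n`: all images of simple roots under elements of the Weyl group. -/
def rootSet (p q r : ℕ) : Set (Idx p q r → ℤ) :=
  { x | ∃ w ∈ weylGroup p q r, ∃ γ ∈ simpleRootSet p q r, x = w γ }

/-- The matrix (over `ℂ`) of the `ℂ`-linear extension of `w` to `Λ_n ⊗ ℂ`. -/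
noncomputable def matC (p q r : ℕ) (w : Module.End ℤ (Idx p q r → ℤ)) :
    Matrix (Idx p q r) (Idx p q r) ℂ :=
  (LinearMap.toMatrix' w).map fun a => (a : ℂ)

/-- `ρ` is the spectral radius of (the `ℂ`-linear extension of) `w`:
the maximum of the absolute values of its eigenvalues. -/
def IsSpectralRadius (p q r : ℕ) (w : Module.End ℤ (Idx p q r → ℤ)) (ρ : ℝ) : Prop :=
  (∃ (μ : ℂ) (v : Idx p q r → ℂ), v ≠ 0 ∧ (matC p q r w).mulVec v = μ • v ∧
      ‖μ‖ = ρ) ∧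
  ∀ (μ : ℂ) (v : Idx p q r → ℂ), v ≠ 0 → (matC p q r w).mulVec v = μ • v →
      ‖μ‖ ≤ ρ

/-- `w` is a Coxeter element: a product of the `n` simple reflections,
each occurring exactly once, in some order. -/
def IsCoxeterElement (p q r : ℕ) (w : Module.End ℤ (Idx p q r → ℤ)) : Prop :=
  ∃ l : List (Idx p q r → ℤ), l.Nodup ∧ (∀ γ, γ ∈ l ↔ γ ∈ simpleRootSet p q r) ∧
    w = (l.map (reflectL p q r)).prod

/-- The simple roots as a family indexed by `Fin (p−2) ⊕ Fin (q+r)`: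
`Sum.inl i ↦ β_{i+1}`, `Sum.inr 0 ↦ α_0`, `Sum.inr k ↦ α_k` (`k ≥ 1`). -/
def simpleRoot (p q r : ℕ) : Fin (p - 2) ⊕ Fin (q + r) → (Idx p q r → ℤ)
  | Sum.inl i =>
      -hvec p q r ⟨i.1, by have := i.isLt; omega⟩ +
        hvec p q r ⟨i.1 + 1, by have := i.isLt; omega⟩
  | Sum.inr k =>
      if (k : ℕ) = 0 then alpha0 p q r
      else evec p q r ⟨k.1 - 1, by have := k.isLt; omega⟩ - evec p q r k

/-- Adjacency in the T-shaped Dynkin diagram `T_{p,q,r}`, in terms of the indexing of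
`simpleRoot`: the chain `α_1 — α_2 — ⋯ — α_{q+r−1}`, the edge `α_0 — α_r`, the edge
`α_0 — β_1`, and the chain `β_1 — β_2 — ⋯ — β_{p−2}`. -/
def adjacent (p q r : ℕ) : (Fin (p - 2) ⊕ Fin (q + r)) → (Fin (p - 2) ⊕ Fin (q + r)) → Prop
  | Sum.inl i, Sum.inl i' => (i' : ℕ) = (i : ℕ) + 1 ∨ (i : ℕ) = (i' : ℕ) + 1
  | Sum.inr k, Sum.inr k' =>
      (1 ≤ (k : ℕ) ∧ (k' : ℕ) = (k : ℕ) + 1) ∨ (1 ≤ (k' : ℕ) ∧ (k : ℕ) = (k' : ℕ) + 1) ∨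
      ((k : ℕ) = 0 ∧ (k' : ℕ) = r) ∨ ((k' : ℕ) = 0 ∧ (k : ℕ) = r)
  | Sum.inl i, Sum.inr k => (i : ℕ) = 0 ∧ (k : ℕ) = 0
  | Sum.inr k, Sum.inl i => (i : ℕ) = 0 ∧ (k : ℕ) = 0

/-- `κ` with real coefficients. -/
def kappaR (p q r : ℕ) : Idx p q r → ℝ := fun k => ((kappa p q r k : ℤ) : ℝ)

/-- `L_n ⊗ ℝ = κ^⊥`, as an `ℝ`-subspace of `Λ_n ⊗ ℝ`. -/
def LsubR (p q r : ℕ) : Submodule ℝ (Idx p q r → ℝ) where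
  carrier := { x | bform p q r x (kappaR p q r) = 0 }
  add_mem' := by
    intro a b ha hb
    simp only [Set.mem_setOf_eq] at ha hb ⊢
    rw [bform_add_left, ha, hb, add_zero]
  zero_mem' := by
    simp [Set.mem_setOf_eq, bform]
  smul_mem' := by
    intro c x hx
    simp only [Set.mem_setOf_eq] at hx ⊢
    rw [bform_smul_left, hx, mul_zero]
lemma bform_eval (p q r : ℕ) (x y : Idx p q r → ℝ) :
    bform p q r x y = ((r:ℝ)-1) * (∑ i, x (Sum.inl i)) * (∑ i, y (Sum.inl i))
      - (∑ i, x (Sum.inl i) * y (Sum.inl i)) - ∑ j, x (Sum.inr j) * y (Sum.inr j) := by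
  unfold bform gram
  rw [Fintype.sum_sum_type]
  simp only [Fintype.sum_sum_type]
  push_cast
  simp only [mul_ite, ite_mul, mul_zero, zero_mul, mul_one, mul_neg, Finset.sum_const_zero,
    add_zero, zero_add]
  have key : ∀ i : Fin (p-1), (∑ j : Fin (p-1),
      if i = j then x (Sum.inl i) * y (Sum.inl j) * ((r:ℝ)-2)
      else x (Sum.inl i) * y (Sum.inl j) * ((r:ℝ)-1))
      = x (Sum.inl i) * ((∑ j : Fin (p-1), y (Sum.inl j)) * ((r:ℝ)-1))
        - x (Sum.inl i) * y (Sum.inl i) := by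
    intro i
    have : ∀ j : Fin (p-1), (if i = j then x (Sum.inl i) * y (Sum.inl j) * ((r:ℝ)-2)
        else x (Sum.inl i) * y (Sum.inl j) * ((r:ℝ)-1))
        = x (Sum.inl i) * (y (Sum.inl j) * ((r:ℝ)-1))
          - (if j = i then x (Sum.inl i) * y (Sum.inl j) else 0) := by
      intro j
      by_cases h : i = j
      · subst h; simp; ring
      · simp [h, Ne.symm h]; ring
    rw [Finset.sum_congr rfl fun j _ => this j, Finset.sum_sub_distrib,
      Finset.sum_ite_eq' Finset.univ i (fun j => x (Sum.inl i) * y (Sum.inl j))]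
    simp [← Finset.mul_sum, Finset.sum_mul]
  rw [Finset.sum_congr rfl fun i _ => key i, Finset.sum_sub_distrib, ← Finset.sum_mul]
  have : ∀ i : Fin (q+r), (∑ j : Fin (q+r),
      if i = j then -(x (Sum.inr i) * y (Sum.inr j)) else 0) = -(x (Sum.inr i) * y (Sum.inr i)) := by
    intro i
    rw [Finset.sum_ite_eq Finset.univ i (fun j => -(x (Sum.inr i) * y (Sum.inr j)))]
    simp
  rw [Finset.sum_congr rfl fun i _ => this i]
  rw [Finset.sum_neg_distrib]
  ring

def uval (m i : ℕ) : ℝ := if m = 0 then 1 else if i < m then 1 else if i = m then -(m:ℝ) else 0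

lemma uval_zero (i : ℕ) : uval 0 i = 1 := by simp [uval]
lemma uval_lt (m i : ℕ) (hm : m ≠ 0) (hi : i < m) : uval m i = 1 := by simp [uval, hm, hi]
lemma uval_self (m : ℕ) (hm : m ≠ 0) : uval m m = -(m:ℝ) := by simp [uval, hm]
lemma uval_gt (m i : ℕ) (hm : m ≠ 0) (hi : m < i) : uval m i = 0 := by
  unfold uval
  rw [if_neg hm, if_neg (by omega), if_neg (by omega)]

lemma sum_step (N m : ℕ) (hm : m < N) (c d : ℝ) (f : ℕ → ℝ)
    (h1 : ∀ i < m, f i = c) (h2 : f m = d) (h3 : ∀ i, m < i → f i = 0) :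
    ∑ i ∈ Finset.range N, f i = m * c + d := by
  rw [Finset.range_eq_Ico, ← Finset.sum_Ico_consecutive _ (Nat.zero_le m) (le_of_lt hm)]
  have e1 : ∑ i ∈ Finset.Ico 0 m, f i = m * c := by
    rw [Finset.sum_congr rfl (fun i hi => h1 i (Finset.mem_Ico.mp hi).2)]
    simp [mul_comm]
  have e2 : ∑ i ∈ Finset.Ico m N, f i = d := by
    have h : ∀ i ∈ Finset.Ico m N, f i = if i = m then d else 0 := by
      intro i hi
      rcases eq_or_lt_of_le (Finset.mem_Ico.mp hi).1 with h|h
      · simp [← h, h2]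
      · rw [h3 i h, if_neg (by omega)]
    rw [Finset.sum_congr rfl h, Finset.sum_ite_eq' (Finset.Ico m N) m (fun _ => d)]
    simp [Finset.mem_Ico, hm]
  rw [e1, e2]

lemma sum_uval0 (N : ℕ) : ∑ i ∈ Finset.range N, uval 0 i = N := by simp [uval]

lemma sum_uval (N m : ℕ) (h1 : 1 ≤ m) (hm : m < N) :
    ∑ i ∈ Finset.range N, uval m i = 0 := by
  have := sum_step N m hm 1 (-(m:ℝ)) (uval m)
    (fun i hi => uval_lt m i (by omega) hi) (uval_self m (by omega))
    (fun i hi => uval_gt m i (by omega) hi)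
  rw [this]; ring

lemma dot_uval_self (N m : ℕ) (h1 : 1 ≤ m) (hm : m < N) :
    ∑ i ∈ Finset.range N, uval m i * uval m i = m + m^2 := by
  have := sum_step N m hm 1 ((m:ℝ)^2) (fun i => uval m i * uval m i)
    (fun i hi => by show uval m i * uval m i = 1; rw [uval_lt m i (by omega) hi]; ring)
    (by show uval m m * uval m m = _; rw [uval_self m (by omega)]; ring)
    (fun i hi => by show uval m i * uval m i = 0; rw [uval_gt m i (by omega) hi]; ring)
  rw [this]; ring

lemma dot_uval (N a b : ℕ) (hb : b < N) (hab : a < b) :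
    ∑ i ∈ Finset.range N, uval a i * uval b i = 0 := by
  rcases Nat.eq_zero_or_pos a with ha | ha
  · subst ha
    have h : ∀ i, uval 0 i * uval b i = uval b i := by intro i; rw [uval_zero, one_mul]
    rw [Finset.sum_congr rfl fun i _ => h i]
    exact sum_uval N b (by omega) hb
  · have := sum_step N a (by omega) 1 (-(a:ℝ)) (fun i => uval a i * uval b i)
      (fun i hi => by show uval a i * uval b i = 1; rw [uval_lt a i (by omega) hi, uval_lt b i (by omega) (by omega)]; ring)
      (by show uval a a * uval b a = _; rw [uval_self a (by omega), uval_lt b a (by omega) hab]; ring)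
      (fun i hi => by show uval a i * uval b i = 0; rw [uval_gt a i (by omega) hi]; ring)
    rw [this]; ring

def wfam (p q r : ℕ) : Idx p q r → Idx p q r → ℝ
  | Sum.inl k, Sum.inl i => uval k.1 i.1
  | Sum.inl _, Sum.inr _ => 0
  | Sum.inr _, Sum.inl _ => 0
  | Sum.inr j, Sum.inr j' => if j' = j then 1 else 0

lemma sum_wfam_inl (p q r : ℕ) (k : Fin (p-1)) :
    ∑ i : Fin (p-1), wfam p q r (Sum.inl k) (Sum.inl i)
      = ∑ i ∈ Finset.range (p-1), uval k.1 i := by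
  exact Fin.sum_univ_eq_sum_range (fun i => uval k.1 i) (p-1)

lemma dot_wfam_inl (p q r : ℕ) (k l : Fin (p-1)) :
    ∑ i : Fin (p-1), wfam p q r (Sum.inl k) (Sum.inl i) * wfam p q r (Sum.inl l) (Sum.inl i)
      = ∑ i ∈ Finset.range (p-1), uval k.1 i * uval l.1 i := by
  exact Fin.sum_univ_eq_sum_range (fun i => uval k.1 i * uval l.1 i) (p-1)

lemma bform_wfam_ll (p q r : ℕ) (k l : Fin (p-1)) :
    bform p q r (wfam p q r (Sum.inl k)) (wfam p q r (Sum.inl l))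
      = ((r:ℝ)-1) * (∑ i ∈ Finset.range (p-1), uval k.1 i) * (∑ i ∈ Finset.range (p-1), uval l.1 i)
        - ∑ i ∈ Finset.range (p-1), uval k.1 i * uval l.1 i := by
  rw [bform_eval, sum_wfam_inl, sum_wfam_inl, dot_wfam_inl]
  simp [wfam]

lemma orth_wfam (p q r : ℕ) (a b : Idx p q r) (hab : a ≠ b) :
    bform p q r (wfam p q r a) (wfam p q r b) = 0 := by
  match a, b with
  | Sum.inl k, Sum.inl l =>
    have hkl : k.1 ≠ l.1 := fun h => hab (by rw [Fin.ext_iff.mpr h])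
    rw [bform_wfam_ll]
    rcases Nat.lt_or_ge k.1 l.1 with h | h
    · rcases Nat.eq_zero_or_pos k.1 with h0 | h0
      · rw [h0, sum_uval (p-1) l.1 (by omega) l.isLt,
          dot_uval (p-1) 0 l.1 l.isLt (by omega)]
        ring
      · rw [sum_uval (p-1) k.1 h0 k.isLt, dot_uval (p-1) k.1 l.1 l.isLt h]
        ring
    · have h' : l.1 < k.1 := by omega
      have hc : ∑ i ∈ Finset.range (p-1), uval k.1 i * uval l.1 i
          = ∑ i ∈ Finset.range (p-1), uval l.1 i * uval k.1 i :=
        Finset.sum_congr rfl fun i _ => mul_comm _ _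
      rcases Nat.eq_zero_or_pos l.1 with h0 | h0
      · rw [sum_uval (p-1) k.1 (by omega) k.isLt, hc, h0,
          dot_uval (p-1) 0 k.1 k.isLt (by omega)]
        ring
      · rw [sum_uval (p-1) l.1 h0 l.isLt, hc, dot_uval (p-1) l.1 k.1 k.isLt h']
        ring
  | Sum.inl k, Sum.inr j =>
    rw [bform_eval]; simp [wfam]
  | Sum.inr j, Sum.inl k =>
    rw [bform_eval]; simp [wfam]
  | Sum.inr j, Sum.inr j' =>
    have h : j ≠ j' := fun h => hab (by rw [h])
    rw [bform_eval]
    simp only [wfam, Finset.sum_const_zero, zero_mul, mul_zero, zero_sub, sub_zero, zero_mul]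
    simp [Finset.sum_ite_eq, h, Ne.symm h, ite_mul, mul_ite]

lemma diag_wfam_pos (p q r : ℕ) (hp : 2 ≤ p) (hr : 3 ≤ r) (k : Fin (p-1)) (hk : k.1 = 0) :
    0 < bform p q r (wfam p q r (Sum.inl k)) (wfam p q r (Sum.inl k)) := by
  rw [bform_wfam_ll, hk]
  have h1 : ∑ i ∈ Finset.range (p-1), uval 0 i * uval 0 i
      = ∑ i ∈ Finset.range (p-1), uval 0 i :=
    Finset.sum_congr rfl fun i _ => by rw [uval_zero, one_mul]
  rw [h1, sum_uval0]
  have hN : (1:ℝ) ≤ ((p-1 : ℕ) : ℝ) := by exact_mod_cast (by omega : 1 ≤ p - 1)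
  have hR : (3:ℝ) ≤ (r : ℝ) := by exact_mod_cast hr
  have h2 : 2 * (((p-1 : ℕ) : ℝ) * ((p-1 : ℕ) : ℝ)) ≤ ((r:ℝ)-1) * (((p-1 : ℕ) : ℝ) * ((p-1 : ℕ) : ℝ)) :=
    mul_le_mul_of_nonneg_right (by linarith) (by positivity)
  nlinarith [h2, hN, mul_le_mul hN hN (by linarith) (by linarith)]

lemma diag_wfam_neg (p q r : ℕ) (k : Fin (p-1)) (hk : k.1 ≠ 0) :
    bform p q r (wfam p q r (Sum.inl k)) (wfam p q r (Sum.inl k)) < 0 := by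
  rw [bform_wfam_ll, sum_uval (p-1) k.1 (by omega) k.isLt,
    dot_uval_self (p-1) k.1 (by omega) k.isLt]
  have : (1:ℝ) ≤ (k.1 : ℝ) := by exact_mod_cast (by omega : 1 ≤ k.1)
  nlinarith

lemma diag_wfam_inr (p q r : ℕ) (j : Fin (q+r)) :
    bform p q r (wfam p q r (Sum.inr j)) (wfam p q r (Sum.inr j)) = -1 := by
  rw [bform_eval]
  simp only [wfam, Finset.sum_const_zero, mul_zero, zero_mul, zero_sub, sub_zero]
  simp [mul_ite, ite_mul, Finset.sum_ite_eq]

lemma bform_zero_left (p q r : ℕ) (y : Idx p q r → ℝ) : bform p q r 0 y = 0 := by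
  simp [bform]

lemma bform_sum_left {ι : Type*} (p q r : ℕ) (s : Finset ι) (f : ι → Idx p q r → ℝ)
    (y : Idx p q r → ℝ) :
    bform p q r (∑ i ∈ s, f i) y = ∑ i ∈ s, bform p q r (f i) y := by
  classical
  induction s using Finset.induction_on with
  | empty => simp [bform_zero_left]
  | insert _ _ h ih => rw [Finset.sum_insert h, Finset.sum_insert h, bform_add_left, ih]

lemma wfam_linearIndependent (p q r : ℕ) (hp : 2 ≤ p) (hq : 2 ≤ q) (hr : 3 ≤ r) :
    LinearIndependent ℝ (wfam p q r) := by
  rw [Fintype.linearIndependent_iff]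
  intro g hg a
  have h0 : bform p q r (∑ i, g i • wfam p q r i) (wfam p q r a) = 0 := by
    rw [hg, bform_zero_left]
  rw [bform_sum_left,
    Finset.sum_congr rfl (fun i _ => bform_smul_left p q r (g i) (wfam p q r i) (wfam p q r a)),
    Finset.sum_eq_single a
      (fun b _ hb => by rw [orth_wfam p q r b a hb, mul_zero])
      (fun h => absurd (Finset.mem_univ a) h)] at h0
  have hQ : bform p q r (wfam p q r a) (wfam p q r a) ≠ 0 := by
    match a with
    | Sum.inl k =>
      rcases Nat.eq_zero_or_pos k.1 with h | h
      · exact ne_of_gt (diag_wfam_pos p q r hp hr k h)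
      · exact ne_of_lt (diag_wfam_neg p q r k (by omega))
    | Sum.inr j => rw [diag_wfam_inr]; norm_num
  exact (mul_eq_zero.mp h0).resolve_right hQ

/-- The symmetric bilinear form on `Λ_n` is nondegenerate of signature
`(1, n)` over the reals: `Λ_n ⊗ ℝ` admits an orthogonal basis consisting of one vector
of positive square and `n = p + q + r - 2` vectors of negative square. -/
theorem stmt_0 (p q r : ℕ) (hp : 2 ≤ p) (hq : 2 ≤ q) (hr : 3 ≤ r) :
    ∃ (b : Module.Basis (Fin (p + q + r - 1)) ℝ (Idx p q r → ℝ)) (i₀ : Fin (p + q + r - 1)),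
      (∀ i j, i ≠ j → bform p q r (b i) (b j) = 0) ∧
      0 < bform p q r (b i₀) (b i₀) ∧
      ∀ i, i ≠ i₀ → bform p q r (b i) (b i) < 0 := by
  have hne : Nonempty (Idx p q r) := ⟨Sum.inr ⟨0, by omega⟩⟩
  have hcard : Fintype.card (Idx p q r) = Module.finrank ℝ (Idx p q r → ℝ) := by
    rw [Module.finrank_pi]
  let b0 : Module.Basis (Idx p q r) ℝ (Idx p q r → ℝ) :=
    basisOfLinearIndependentOfCardEqFinrank (wfam_linearIndependent p q r hp hq hr) hcard
  have hb0 : ∀ a, b0 a = wfam p q r a := fun a => by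
    simp [b0, coe_basisOfLinearIndependentOfCardEqFinrank]
  have hec : Fintype.card (Fin (p + q + r - 1)) = Fintype.card (Idx p q r) := by
    simp [Fintype.card_sum]
    omega
  let e : Fin (p + q + r - 1) ≃ Idx p q r := Fintype.equivOfCardEq hec
  refine ⟨b0.reindex e.symm, e.symm (Sum.inl ⟨0, by omega⟩), ?_, ?_, ?_⟩
  · intro i j hij
    rw [Module.Basis.reindex_apply, Module.Basis.reindex_apply, Equiv.symm_symm, hb0, hb0]
    exact orth_wfam p q r (e i) (e j) (fun h => hij (e.injective h))
  · rw [Module.Basis.reindex_apply, Equiv.symm_symm, Equiv.apply_symm_apply, hb0]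
    exact diag_wfam_pos p q r hp hr ⟨0, by omega⟩ rfl
  · intro i hi
    rw [Module.Basis.reindex_apply, Equiv.symm_symm, hb0]
    have hei : e i ≠ Sum.inl ⟨0, by omega⟩ := by
      intro h
      exact hi (by rw [← Equiv.symm_apply_apply e i, h])
    match hm : e i with
    | Sum.inl k =>
      refine diag_wfam_neg p q r k ?_
      intro h0
      exact hei (by rw [hm]; congr 1; exact Fin.ext h0)
    | Sum.inr j =>
      rw [diag_wfam_inr]
      norm_num
end

section
/- The n simple roots β_1, …, β_{p−2}, α_0, α_1, …, α_{q+r−1} form a ℤ-basis of the root lattice L_n = κ^⊥ ∩ Λ_n. -/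
open Finset

/-! ### Auxiliary lemmas -/

section Aux

open Finset

lemma interval_sum_range (N a b : ℕ) (c : ℤ) :
    ∑ l ∈ Finset.range N, (if a ≤ l ∧ l < b then c else 0) = ((min b N - min a N : ℕ) : ℤ) * c := by
  induction N with
  | zero => simp
  | succ n ih =>
    rw [Finset.sum_range_succ, ih]
    split_ifs with h
    · have e : min b (n+1) - min a (n+1) = (min b n - min a n) + 1 := by omega
      rw [e]; push_cast; ring
    · have e : min b (n+1) - min a (n+1) = min b n - min a n := by omega
      rw [e, add_zero]

lemma interval_sum (N a b : ℕ) (c : ℤ) :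
    ∑ l : Fin N, (if a ≤ l.1 ∧ l.1 < b then c else 0) = ((min b N - min a N : ℕ) : ℤ) * c := by
  rw [Fin.sum_univ_eq_sum_range (fun l => if a ≤ l ∧ l < b then c else 0) N]
  exact interval_sum_range N a b c

lemma delta_sum {N : ℕ} (f : Fin N → ℤ) (P : Fin N → Prop) [DecidablePred P] (m : ℕ)
    (hP : ∀ l : Fin N, P l ↔ l.1 = m) (hm : m < N) :
    ∑ l : Fin N, (if P l then f l else 0) = f ⟨m, hm⟩ := by
  have e : ∀ l : Fin N, (if P l then f l else 0) = if l = ⟨m, hm⟩ then f l else 0 := by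
    intro l
    exact if_congr ((hP l).trans (by simp [Fin.ext_iff])) rfl rfl
  rw [Finset.sum_congr rfl (fun l _ => e l), Finset.sum_ite_eq' Finset.univ ⟨m, hm⟩ f]
  simp

lemma delta_sum_zero {N : ℕ} (f : Fin N → ℤ) (P : Fin N → Prop) [DecidablePred P]
    (hP : ∀ l : Fin N, ¬ P l) :
    ∑ l : Fin N, (if P l then f l else 0) = 0 :=
  Finset.sum_eq_zero fun l _ => if_neg (hP l)

lemma kappa_inl (p q r : ℕ) (i : Fin (p - 1)) : kappa p q r (Sum.inl i) = (r : ℤ) := by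
  simp [kappa, hvec, evec, Finset.sum_apply]

lemma kappa_inr (p q r : ℕ) (j : Fin (q + r)) :
    kappa p q r (Sum.inr j) = -(((p : ℤ) - 1) * ((r : ℤ) - 1) - 1) := by
  simp [kappa, hvec, evec, Finset.sum_apply]

lemma gram_row_sum {N : ℕ} (a : Fin N) (c : ℤ) :
    ∑ b : Fin N, (if a = b then c - 1 else c) = N * c - 1 := by
  have e : ∀ b : Fin N, (if a = b then c - 1 else c) = c - (if a = b then (1:ℤ) else 0) := by
    intro b; split_ifs <;> ring
  rw [Finset.sum_congr rfl (fun b _ => e b), Finset.sum_sub_distrib, Finset.sum_const,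
    Finset.sum_ite_eq]
  simp [mul_comm]

lemma bform_kappa (p q r : ℕ) (hp : 2 ≤ p) (x : Idx p q r → ℤ) :
    bform p q r x (kappa p q r) =
      (((p : ℤ) - 1) * ((r : ℤ) - 1) - 1) *
        ((r : ℤ) * ∑ i : Fin (p - 1), x (Sum.inl i) + ∑ j : Fin (q + r), x (Sum.inr j)) := by
  set C : ℤ := ((p : ℤ) - 1) * ((r : ℤ) - 1) - 1 with hC
  unfold bform
  simp only [Int.cast_id]
  rw [Fintype.sum_sum_type]
  have key1 : ∀ a : Fin (p - 1),
      ∑ j : Idx p q r, x (Sum.inl a) * kappa p q r j * gram p q r (Sum.inl a) j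
        = x (Sum.inl a) * ((r : ℤ) * C) := by
    intro a
    rw [Fintype.sum_sum_type]
    have e2 : ∑ b : Fin (q + r),
        x (Sum.inl a) * kappa p q r (Sum.inr b) * gram p q r (Sum.inl a) (Sum.inr b) = 0 := by
      apply Finset.sum_eq_zero; intro b _; simp [gram]
    rw [e2, add_zero]
    have e1 : ∀ b : Fin (p - 1),
        x (Sum.inl a) * kappa p q r (Sum.inl b) * gram p q r (Sum.inl a) (Sum.inl b)
          = (x (Sum.inl a) * (r : ℤ)) * (if a = b then ((r:ℤ)-1) - 1 else ((r:ℤ)-1)) := by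
      intro b
      rw [kappa_inl]
      show x (Sum.inl a) * (r : ℤ) * (if a = b then (r : ℤ) - 2 else (r : ℤ) - 1) = _
      split_ifs <;> ring
    rw [Finset.sum_congr rfl (fun b _ => e1 b), ← Finset.mul_sum, gram_row_sum]
    have : ((p - 1 : ℕ) : ℤ) = (p : ℤ) - 1 := by
      have : (1:ℕ) ≤ p := by omega
      push_cast [this]; ring
    rw [this, hC]; ring
  have key2 : ∀ a : Fin (q + r),
      ∑ j : Idx p q r, x (Sum.inr a) * kappa p q r j * gram p q r (Sum.inr a) j
        = x (Sum.inr a) * C := by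
    intro a
    rw [Fintype.sum_sum_type]
    have e1 : ∑ b : Fin (p - 1),
        x (Sum.inr a) * kappa p q r (Sum.inl b) * gram p q r (Sum.inr a) (Sum.inl b) = 0 := by
      apply Finset.sum_eq_zero; intro b _; simp [gram]
    rw [e1, zero_add]
    have e2 : ∀ b : Fin (q + r),
        x (Sum.inr a) * kappa p q r (Sum.inr b) * gram p q r (Sum.inr a) (Sum.inr b)
          = if a = b then x (Sum.inr a) * C else 0 := by
      intro b
      rw [kappa_inr]
      show x (Sum.inr a) * (-C) * (if a = b then (-1 : ℤ) else 0) = _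
      split_ifs <;> ring
    rw [Finset.sum_congr rfl (fun b _ => e2 b), Finset.sum_ite_eq]
    simp
  rw [Finset.sum_congr rfl (fun a _ => key1 a), Finset.sum_congr rfl (fun a _ => key2 a),
    ← Finset.sum_mul, ← Finset.sum_mul]
  ring

lemma mem_Lsub_iff (p q r : ℕ) (hp : 2 ≤ p) (hr : 3 ≤ r) (x : Idx p q r → ℤ) :
    x ∈ Lsub p q r ↔
      (r : ℤ) * ∑ i : Fin (p - 1), x (Sum.inl i) + ∑ j : Fin (q + r), x (Sum.inr j) = 0 := by
  have hmem : x ∈ Lsub p q r ↔ bform p q r x (kappa p q r) = 0 := Iff.rfl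
  rw [hmem, bform_kappa p q r hp x, mul_eq_zero]
  have hC : (((p : ℤ) - 1) * ((r : ℤ) - 1) - 1) ≠ 0 := by
    have h1 : (2 : ℤ) ≤ (p : ℤ) := by exact_mod_cast hp
    have h2 : (3 : ℤ) ≤ (r : ℤ) := by exact_mod_cast hr
    nlinarith
  constructor
  · rintro (h | h)
    · exact absurd h hC
    · exact h
  · exact fun h => Or.inr h

end Aux


section Main

open Finset

/-- The dual functionals (unbundled). -/
def phiF (p q r : ℕ) : (Fin (p - 2) ⊕ Fin (q + r)) → (Idx p q r → ℤ) → ℤ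
  | Sum.inl i => fun x => ∑ l : Fin (p - 1), if i.1 < l.1 then x (Sum.inl l) else 0
  | Sum.inr m => fun x =>
      (if m.1 = 0 then 1 else ((min m.1 r : ℕ) : ℤ)) *
          ∑ l : Fin (p - 1), x (Sum.inl l)
        + ∑ l : Fin (q + r), if l.1 < m.1 then x (Sum.inr l) else 0

lemma phiF_add (p q r : ℕ) (s : Fin (p - 2) ⊕ Fin (q + r)) (x y : Idx p q r → ℤ) :
    phiF p q r s (x + y) = phiF p q r s x + phiF p q r s y := by
  rcases s with i | m
  · simp only [phiF, Pi.add_apply]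
    rw [← Finset.sum_add_distrib]
    exact Finset.sum_congr rfl fun l _ => by split_ifs <;> simp
  · simp only [phiF, Pi.add_apply]
    rw [Finset.sum_add_distrib, mul_add,
      Finset.sum_congr rfl (fun l (_ : l ∈ Finset.univ) =>
        (show (if l.1 < m.1 then x (Sum.inr l) + y (Sum.inr l) else 0)
            = (if l.1 < m.1 then x (Sum.inr l) else 0)
              + (if l.1 < m.1 then y (Sum.inr l) else 0) from by split_ifs <;> simp)),
      Finset.sum_add_distrib]
    ring

lemma phiF_smul (p q r : ℕ) (s : Fin (p - 2) ⊕ Fin (q + r)) (c : ℤ) (x : Idx p q r → ℤ) :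
    phiF p q r s (c • x) = c * phiF p q r s x := by
  rcases s with i | m
  · simp only [phiF, Pi.smul_apply, smul_eq_mul]
    rw [Finset.mul_sum]
    exact Finset.sum_congr rfl fun l _ => by split_ifs <;> ring
  · simp only [phiF, Pi.smul_apply, smul_eq_mul]
    rw [Finset.sum_congr rfl (fun (l : Fin (q + r)) (_ : l ∈ Finset.univ) =>
        (show (if l.1 < m.1 then c * x (Sum.inr l) else 0)
            = c * (if l.1 < m.1 then x (Sum.inr l) else 0) from by split_ifs <;> ring)),
      ← Finset.mul_sum, ← Finset.mul_sum]
    ring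

/-- The dual functionals, bundled as linear maps. -/
def phiL (p q r : ℕ) (s : Fin (p - 2) ⊕ Fin (q + r)) : (Idx p q r → ℤ) →ₗ[ℤ] ℤ where
  toFun := phiF p q r s
  map_add' := phiF_add p q r s
  map_smul' c x := by simpa using phiF_smul p q r s c x

/-! ### Coordinate values of the simple roots -/

lemma simpleRoot_inl_inl (p q r : ℕ) (i : Fin (p - 2)) (l : Fin (p - 1)) :
    simpleRoot p q r (Sum.inl i) (Sum.inl l)
      = (if l.1 = i.1 then -1 else 0) + (if l.1 = i.1 + 1 then 1 else 0) := by
  simp only [simpleRoot, Pi.add_apply, Pi.neg_apply, hvec, Sum.inl.injEq, Fin.ext_iff,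
    Fin.val_mk]
  split_ifs <;> omega

lemma simpleRoot_inl_inr (p q r : ℕ) (i : Fin (p - 2)) (l : Fin (q + r)) :
    simpleRoot p q r (Sum.inl i) (Sum.inr l) = 0 := by
  simp [simpleRoot, hvec]

lemma simpleRoot_inr_inl (p q r : ℕ) (k : Fin (q + r)) (l : Fin (p - 1)) :
    simpleRoot p q r (Sum.inr k) (Sum.inl l) = if k.1 = 0 ∧ l.1 = 0 then 1 else 0 := by
  by_cases hk : k.1 = 0 <;>
    simp [simpleRoot, hk, alpha0, evec, Fin.ext_iff] <;> split_ifs <;> omega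

lemma simpleRoot_inr_inr (p q r : ℕ) (k l : Fin (q + r)) :
    simpleRoot p q r (Sum.inr k) (Sum.inr l)
      = if k.1 = 0 then (if l.1 < r then -1 else 0)
        else ((if l.1 = k.1 - 1 then 1 else 0) + (if l.1 = k.1 then -1 else 0)) := by
  by_cases hk : k.1 = 0 <;>
    simp only [simpleRoot, hk, if_true, if_false, alpha0, evec, Pi.sub_apply, Sum.inr.injEq,
      Fin.ext_iff, Fin.val_mk] <;> split_ifs <;> omega

/-! ### The simple roots lie in the root lattice -/

lemma root_mem (p q r : ℕ) (hp : 2 ≤ p) (hq : 2 ≤ q) (hr : 3 ≤ r)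
    (t : Fin (p - 2) ⊕ Fin (q + r)) : simpleRoot p q r t ∈ Lsub p q r := by
  rw [mem_Lsub_iff p q r hp hr]
  rcases t with i | k
  · have hA : ∑ l : Fin (p - 1), simpleRoot p q r (Sum.inl i) (Sum.inl l) = 0 := by
      have hi := i.2
      rw [Finset.sum_congr rfl (fun (l : Fin (p - 1)) (_ : l ∈ Finset.univ) =>
        (show simpleRoot p q r (Sum.inl i) (Sum.inl l)
            = (if i.1 ≤ l.1 ∧ l.1 < i.1 + 1 then (-1:ℤ) else 0)
              + (if i.1 + 1 ≤ l.1 ∧ l.1 < i.1 + 2 then 1 else 0) from by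
          rw [simpleRoot_inl_inl]; split_ifs <;> omega)),
        Finset.sum_add_distrib, interval_sum, interval_sum]
      omega
    have hB : ∑ l : Fin (q + r), simpleRoot p q r (Sum.inl i) (Sum.inr l) = 0 :=
      Finset.sum_eq_zero fun l _ => simpleRoot_inl_inr p q r i l
    rw [hA, hB]; ring
  · have hA : ∑ l : Fin (p - 1), simpleRoot p q r (Sum.inr k) (Sum.inl l)
        = if k.1 = 0 then 1 else 0 := by
      rw [Finset.sum_congr rfl (fun (l : Fin (p - 1)) (_ : l ∈ Finset.univ) =>
        (show simpleRoot p q r (Sum.inr k) (Sum.inl l)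
            = (if 0 ≤ l.1 ∧ l.1 < (if k.1 = 0 then 1 else 0) then (1:ℤ) else 0) from by
          rw [simpleRoot_inr_inl]; split_ifs <;> omega)),
        interval_sum]
      split_ifs <;> omega
    have hB : ∑ l : Fin (q + r), simpleRoot p q r (Sum.inr k) (Sum.inr l)
        = if k.1 = 0 then -(r : ℤ) else 0 := by
      by_cases hk : k.1 = 0
      · rw [Finset.sum_congr rfl (fun (l : Fin (q + r)) (_ : l ∈ Finset.univ) =>
          (show simpleRoot p q r (Sum.inr k) (Sum.inr l)
              = (if 0 ≤ l.1 ∧ l.1 < r then (-1:ℤ) else 0) from by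
            rw [simpleRoot_inr_inr, if_pos hk]; split_ifs <;> omega)),
          interval_sum, if_pos hk]
        omega
      · have hk2 := k.2
        rw [Finset.sum_congr rfl (fun (l : Fin (q + r)) (_ : l ∈ Finset.univ) =>
          (show simpleRoot p q r (Sum.inr k) (Sum.inr l)
              = (if k.1 - 1 ≤ l.1 ∧ l.1 < k.1 then (1:ℤ) else 0)
                + (if k.1 ≤ l.1 ∧ l.1 < k.1 + 1 then (-1:ℤ) else 0) from by
            rw [simpleRoot_inr_inr, if_neg hk]; split_ifs <;> omega)),
          Finset.sum_add_distrib, interval_sum, interval_sum, if_neg hk]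
        omega
    rw [hA, hB]
    split_ifs <;> ring

/-! ### Duality between the functionals and the simple roots -/

lemma phiF_root (p q r : ℕ) (hp : 2 ≤ p) (hq : 2 ≤ q) (hr : 3 ≤ r)
    (s t : Fin (p - 2) ⊕ Fin (q + r)) :
    phiF p q r s (simpleRoot p q r t) = if s = t then 1 else 0 := by
  rcases s with i | m <;> rcases t with i' | k
  · -- s = β_i, t = β_i'
    have hi := i.2; have hi' := i'.2
    simp only [phiF]
    rw [Finset.sum_congr rfl (fun (l : Fin (p - 1)) (_ : l ∈ Finset.univ) =>
      (show (if i.1 < l.1 then simpleRoot p q r (Sum.inl i') (Sum.inl l) else 0)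
          = (if max (i.1 + 1) i'.1 ≤ l.1 ∧ l.1 < i'.1 + 1 then (-1:ℤ) else 0)
            + (if max (i.1 + 1) (i'.1 + 1) ≤ l.1 ∧ l.1 < i'.1 + 2 then 1 else 0) from by
        rw [simpleRoot_inl_inl]; split_ifs <;> omega)),
      Finset.sum_add_distrib, interval_sum, interval_sum]
    by_cases h : i.1 = i'.1
    · rw [if_pos (by exact congrArg _ (Fin.ext h))]; omega
    · rw [if_neg (fun hc => h (congrArg Fin.val (Sum.inl.inj hc)))]; omega
  · -- s = β_i, t = α_k : 0
    simp only [phiF]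
    rw [if_neg (by simp)]
    refine Finset.sum_eq_zero fun l _ => ?_
    rw [simpleRoot_inr_inl]
    split_ifs <;> omega
  · -- s = α_m, t = β_i' : 0
    have hi' := i'.2
    simp only [phiF]
    rw [if_neg (show ¬ (Sum.inr (α := Fin (p - 2)) m = Sum.inl i') by simp)]
    have hA : ∑ l : Fin (p - 1), simpleRoot p q r (Sum.inl i') (Sum.inl l) = 0 := by
      rw [Finset.sum_congr rfl (fun (l : Fin (p - 1)) (_ : l ∈ Finset.univ) =>
        (show simpleRoot p q r (Sum.inl i') (Sum.inl l)
            = (if i'.1 ≤ l.1 ∧ l.1 < i'.1 + 1 then (-1:ℤ) else 0)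
              + (if i'.1 + 1 ≤ l.1 ∧ l.1 < i'.1 + 2 then 1 else 0) from by
          rw [simpleRoot_inl_inl]; split_ifs <;> omega)),
        Finset.sum_add_distrib, interval_sum, interval_sum]
      omega
    rw [hA, mul_zero, zero_add]
    refine Finset.sum_eq_zero fun l _ => ?_
    rw [simpleRoot_inl_inr]
    split_ifs <;> rfl
  · -- s = α_m, t = α_k
    have hm := m.2; have hk := k.2
    simp only [phiF]
    by_cases hk0 : k.1 = 0
    · have hA : ∑ l : Fin (p - 1), simpleRoot p q r (Sum.inr k) (Sum.inl l) = 1 := by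
        rw [Finset.sum_congr rfl (fun (l : Fin (p - 1)) (_ : l ∈ Finset.univ) =>
          (show simpleRoot p q r (Sum.inr k) (Sum.inl l)
              = (if 0 ≤ l.1 ∧ l.1 < 1 then (1:ℤ) else 0) from by
            rw [simpleRoot_inr_inl]; split_ifs <;> omega)),
          interval_sum]
        omega
      have hG : ∑ l : Fin (q + r),
          (if l.1 < m.1 then simpleRoot p q r (Sum.inr k) (Sum.inr l) else 0)
            = -((min m.1 r : ℕ) : ℤ) := by
        rw [Finset.sum_congr rfl (fun (l : Fin (q + r)) (_ : l ∈ Finset.univ) =>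
          (show (if l.1 < m.1 then simpleRoot p q r (Sum.inr k) (Sum.inr l) else 0)
              = (if 0 ≤ l.1 ∧ l.1 < min m.1 r then (-1:ℤ) else 0) from by
            rw [simpleRoot_inr_inr, if_pos hk0]; split_ifs <;> omega)),
          interval_sum]
        omega
      rw [hA, hG, mul_one]
      by_cases h : Sum.inr (β := Fin (q + r)) (α := Fin (p - 2)) m = Sum.inr k
      · have hmk : m.1 = k.1 := congrArg Fin.val (Sum.inr.inj h)
        rw [if_pos h]
        split_ifs <;> omega
      · have hmk : ¬ m.1 = k.1 := fun hc => h (congrArg _ (Fin.ext hc))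
        rw [if_neg h]
        split_ifs <;> omega
    · have hA : ∑ l : Fin (p - 1), simpleRoot p q r (Sum.inr k) (Sum.inl l) = 0 := by
        refine Finset.sum_eq_zero fun l _ => ?_
        rw [simpleRoot_inr_inl]
        split_ifs <;> omega
      have hG : ∑ l : Fin (q + r),
          (if l.1 < m.1 then simpleRoot p q r (Sum.inr k) (Sum.inr l) else 0)
            = ((min (min m.1 k.1) (q + r) - min (k.1 - 1) (q + r) : ℕ) : ℤ) * 1
              + ((min (min m.1 (k.1 + 1)) (q + r) - min k.1 (q + r) : ℕ) : ℤ) * (-1) := by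
        rw [Finset.sum_congr rfl (fun (l : Fin (q + r)) (_ : l ∈ Finset.univ) =>
          (show (if l.1 < m.1 then simpleRoot p q r (Sum.inr k) (Sum.inr l) else 0)
              = (if k.1 - 1 ≤ l.1 ∧ l.1 < min m.1 k.1 then (1:ℤ) else 0)
                + (if k.1 ≤ l.1 ∧ l.1 < min m.1 (k.1 + 1) then (-1:ℤ) else 0) from by
            rw [simpleRoot_inr_inr, if_neg hk0]; split_ifs <;> omega)),
          Finset.sum_add_distrib, interval_sum, interval_sum]
      rw [hA, hG, mul_zero, zero_add]
      by_cases h : Sum.inr (β := Fin (q + r)) (α := Fin (p - 2)) m = Sum.inr k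
      · have hmk : m.1 = k.1 := congrArg Fin.val (Sum.inr.inj h)
        rw [if_pos h]; omega
      · have hmk : ¬ m.1 = k.1 := fun hc => h (congrArg _ (Fin.ext hc))
        rw [if_neg h]; omega

end Main


section Repr

open Finset

lemma tele_top {N : ℕ} (y : Fin N → ℤ) (j : Fin N) (hj : 1 ≤ j.1) :
    (∑ l : Fin N, if j.1 - 1 < l.1 then y l else 0)
      - (∑ l : Fin N, if j.1 < l.1 then y l else 0) = y j := by
  rw [← Finset.sum_sub_distrib,
    Finset.sum_congr rfl (fun (l : Fin N) (_ : l ∈ Finset.univ) =>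
      (show (if j.1 - 1 < l.1 then y l else 0) - (if j.1 < l.1 then y l else 0)
          = (if l.1 = j.1 then y l else 0) from by
        split_ifs <;> (try ring) <;> (exfalso; omega))),
    delta_sum y (fun l => l.1 = j.1) j.1 (fun l => Iff.rfl) j.2]

lemma tele_zero {N : ℕ} (y : Fin N → ℤ) (j : Fin N) (hj : j.1 = 0) :
    (∑ l : Fin N, y l) - (∑ l : Fin N, if j.1 < l.1 then y l else 0) = y j := by
  rw [← Finset.sum_sub_distrib,
    Finset.sum_congr rfl (fun (l : Fin N) (_ : l ∈ Finset.univ) =>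
      (show y l - (if j.1 < l.1 then y l else 0) = (if l.1 = j.1 then y l else 0) from by
        split_ifs <;> (try ring) <;> (exfalso; omega))),
    delta_sum y (fun l => l.1 = j.1) j.1 (fun l => Iff.rfl) j.2]

lemma tele_low {N : ℕ} (y : Fin N → ℤ) (m : ℕ) (hm : m < N) :
    (∑ l : Fin N, if l.1 < m + 1 then y l else 0)
      - (∑ l : Fin N, if l.1 < m then y l else 0) = y ⟨m, hm⟩ := by
  rw [← Finset.sum_sub_distrib,
    Finset.sum_congr rfl (fun (l : Fin N) (_ : l ∈ Finset.univ) =>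
      (show (if l.1 < m + 1 then y l else 0) - (if l.1 < m then y l else 0)
          = (if l.1 = m then y l else 0) from by
        split_ifs <;> (try ring) <;> (exfalso; omega))),
    delta_sum y (fun l => l.1 = m) m (fun l => Iff.rfl) hm]

lemma tele_low_all {N : ℕ} (y : Fin N → ℤ) (h : 0 < N) :
    (∑ l : Fin N, y l) - (∑ l : Fin N, if l.1 < N - 1 then y l else 0)
      = y ⟨N - 1, by omega⟩ := by
  rw [← Finset.sum_sub_distrib,
    Finset.sum_congr rfl (fun (l : Fin N) (_ : l ∈ Finset.univ) =>
      (show y l - (if l.1 < N - 1 then y l else 0) = (if l.1 = N - 1 then y l else 0) from by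
        have := l.2; split_ifs <;> (try ring) <;> (exfalso; omega))),
    delta_sum y (fun l => l.1 = N - 1) (N - 1) (fun l => Iff.rfl) (by omega)]

/-- Every element of the root lattice is the explicit integral combination of the
simple roots given by the dual functionals. -/
lemma repr_sum (p q r : ℕ) (hp : 2 ≤ p) (hq : 2 ≤ q) (hr : 3 ≤ r) (x : Idx p q r → ℤ)
    (hx : (r : ℤ) * ∑ i : Fin (p - 1), x (Sum.inl i) + ∑ j : Fin (q + r), x (Sum.inr j) = 0) :
    ∑ t : Fin (p - 2) ⊕ Fin (q + r), phiF p q r t x • simpleRoot p q r t = x := by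
  funext k
  rw [Finset.sum_apply, Fintype.sum_sum_type]
  simp only [Pi.smul_apply, smul_eq_mul]
  rcases k with j | j
  · -- h-coordinate
    have hj2 := j.2
    rw [Finset.sum_congr rfl (fun (i : Fin (p - 2)) (_ : i ∈ Finset.univ) =>
      (show phiF p q r (Sum.inl i) x * simpleRoot p q r (Sum.inl i) (Sum.inl j)
          = (if j.1 = i.1 then -(phiF p q r (Sum.inl i) x) else 0)
            + (if j.1 = i.1 + 1 then phiF p q r (Sum.inl i) x else 0) from by
        rw [simpleRoot_inl_inl]; split_ifs <;> (try ring) <;> (exfalso; omega))),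
      Finset.sum_add_distrib,
      Finset.sum_congr rfl (fun (m : Fin (q + r)) (_ : m ∈ Finset.univ) =>
      (show phiF p q r (Sum.inr m) x * simpleRoot p q r (Sum.inr m) (Sum.inl j)
          = (if m.1 = 0 ∧ j.1 = 0 then phiF p q r (Sum.inr m) x else 0) from by
        rw [simpleRoot_inr_inl]; split_ifs <;> (try ring) <;> (exfalso; omega)))]
    have hT1 : ∑ i : Fin (p - 2), (if j.1 = i.1 then -(phiF p q r (Sum.inl i) x) else 0)
        = -(∑ l : Fin (p - 1), if j.1 < l.1 then x (Sum.inl l) else 0) := by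
      by_cases h : j.1 < p - 2
      · rw [delta_sum (fun i => -(phiF p q r (Sum.inl i) x)) (fun i => j.1 = i.1) j.1
          (fun i => eq_comm) h]
        simp only [phiF, Fin.val_mk]
      · have h0 : ∑ l : Fin (p - 1), (if j.1 < l.1 then x (Sum.inl l) else 0) = 0 :=
          Finset.sum_eq_zero fun l _ => if_neg (by have := l.2; omega)
        rw [h0, delta_sum_zero _ _ (fun i => by have := i.2; omega), neg_zero]
    have hT2 : ∑ i : Fin (p - 2), (if j.1 = i.1 + 1 then phiF p q r (Sum.inl i) x else 0)
        = (if j.1 = 0 then 0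
            else ∑ l : Fin (p - 1), if j.1 - 1 < l.1 then x (Sum.inl l) else 0) := by
      by_cases hj : j.1 = 0
      · rw [if_pos hj, delta_sum_zero _ _ (fun i => by omega)]
      · rw [if_neg hj, delta_sum (fun i => phiF p q r (Sum.inl i) x) (fun i => j.1 = i.1 + 1)
          (j.1 - 1) (fun i => by omega) (by omega)]
        simp only [phiF, Fin.val_mk]
    have hS2 : ∑ m : Fin (q + r), (if m.1 = 0 ∧ j.1 = 0 then phiF p q r (Sum.inr m) x else 0)
        = (if j.1 = 0 then ∑ l : Fin (p - 1), x (Sum.inl l) else 0) := by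
      by_cases hj : j.1 = 0
      · rw [if_pos hj, delta_sum (fun m => phiF p q r (Sum.inr m) x)
          (fun m => m.1 = 0 ∧ j.1 = 0) 0 (fun m => by simp [hj]) (by omega)]
        simp [phiF]
      · rw [if_neg hj, delta_sum_zero _ _ (fun m => by simp [hj])]
    rw [hT1, hT2, hS2]
    by_cases hj : j.1 = 0
    · rw [if_pos hj, if_pos hj]
      have h2 : (∑ l : Fin (p - 1), x (Sum.inl l))
          - (∑ l : Fin (p - 1), if j.1 < l.1 then x (Sum.inl l) else 0) = x (Sum.inl j) :=
        tele_zero _ j hj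
      linarith
    · rw [if_neg hj, if_neg hj]
      have h2 : (∑ l : Fin (p - 1), if j.1 - 1 < l.1 then x (Sum.inl l) else 0)
          - (∑ l : Fin (p - 1), if j.1 < l.1 then x (Sum.inl l) else 0) = x (Sum.inl j) :=
        tele_top _ j (by omega)
      linarith
  · -- e-coordinate
    have hj2 := j.2
    have hZ : ∑ i : Fin (p - 2),
        phiF p q r (Sum.inl i) x * simpleRoot p q r (Sum.inl i) (Sum.inr j) = 0 :=
      Finset.sum_eq_zero fun i _ => by rw [simpleRoot_inl_inr, mul_zero]
    rw [hZ, zero_add,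
      Finset.sum_congr rfl (fun (m : Fin (q + r)) (_ : m ∈ Finset.univ) =>
      (show phiF p q r (Sum.inr m) x * simpleRoot p q r (Sum.inr m) (Sum.inr j)
          = (if m.1 = 0 ∧ j.1 < r then -(phiF p q r (Sum.inr m) x) else 0)
            + ((if ¬ m.1 = 0 ∧ j.1 = m.1 - 1 then phiF p q r (Sum.inr m) x else 0)
              + (if ¬ m.1 = 0 ∧ j.1 = m.1 then -(phiF p q r (Sum.inr m) x) else 0)) from by
        rw [simpleRoot_inr_inr]; split_ifs <;> (try ring) <;> (exfalso; omega))),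
      Finset.sum_add_distrib, Finset.sum_add_distrib]
    have hD0 : ∑ m : Fin (q + r),
        (if m.1 = 0 ∧ j.1 < r then -(phiF p q r (Sum.inr m) x) else 0)
          = if j.1 < r then -(∑ l : Fin (p - 1), x (Sum.inl l)) else 0 := by
      by_cases hjr : j.1 < r
      · rw [if_pos hjr, delta_sum (fun m => -(phiF p q r (Sum.inr m) x))
          (fun m => m.1 = 0 ∧ j.1 < r) 0 (fun m => by simp [hjr]) (by omega)]
        simp [phiF]
      · rw [if_neg hjr, delta_sum_zero _ _ (fun m => by simp [hjr])]
    rw [hD0]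
    by_cases htop : j.1 + 1 < q + r
    · have hD1 : ∑ m : Fin (q + r),
          (if ¬ m.1 = 0 ∧ j.1 = m.1 - 1 then phiF p q r (Sum.inr m) x else 0)
            = (if j.1 + 1 = 0 then 1 else ((min (j.1 + 1) r : ℕ) : ℤ)) *
                (∑ l : Fin (p - 1), x (Sum.inl l))
              + ∑ l : Fin (q + r), (if l.1 < j.1 + 1 then x (Sum.inr l) else 0) := by
        rw [delta_sum (fun m => phiF p q r (Sum.inr m) x)
          (fun m => ¬ m.1 = 0 ∧ j.1 = m.1 - 1) (j.1 + 1) (fun m => by omega) htop]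
        simp only [phiF, Fin.val_mk]
      have h2 : (∑ l : Fin (q + r), if l.1 < j.1 + 1 then x (Sum.inr l) else 0)
          - (∑ l : Fin (q + r), if l.1 < j.1 then x (Sum.inr l) else 0) = x (Sum.inr j) := by
        have h := tele_low (fun l : Fin (q + r) => x (Sum.inr l)) j.1 hj2
        simpa using h
      by_cases hj0 : j.1 = 0
      · have hD2 : ∑ m : Fin (q + r),
            (if ¬ m.1 = 0 ∧ j.1 = m.1 then -(phiF p q r (Sum.inr m) x) else 0) = 0 :=
          delta_sum_zero _ _ (fun m => by omega)
        rw [hD1, hD2, if_pos (show j.1 < r by omega), if_neg (show ¬ j.1 + 1 = 0 by omega)]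
        have hmin : min (j.1 + 1) r = 1 := by omega
        rw [hmin]
        have h3 : ∑ l : Fin (q + r), (if l.1 < j.1 then x (Sum.inr l) else 0) = 0 :=
          Finset.sum_eq_zero fun l _ => if_neg (by omega)
        simp only [Nat.cast_one]
        linarith
      · have hD2 : ∑ m : Fin (q + r),
            (if ¬ m.1 = 0 ∧ j.1 = m.1 then -(phiF p q r (Sum.inr m) x) else 0)
              = -((if j.1 = 0 then 1 else ((min j.1 r : ℕ) : ℤ)) *
                  (∑ l : Fin (p - 1), x (Sum.inl l))
                + ∑ l : Fin (q + r), (if l.1 < j.1 then x (Sum.inr l) else 0)) := by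
          rw [delta_sum (fun m => -(phiF p q r (Sum.inr m) x))
            (fun m => ¬ m.1 = 0 ∧ j.1 = m.1) j.1 (fun m => by omega) hj2]
          simp only [phiF, Fin.val_mk]
        rw [hD1, hD2, if_neg (show ¬ j.1 + 1 = 0 by omega), if_neg hj0]
        by_cases hjr : j.1 < r
        · rw [if_pos hjr]
          have e1 : min (j.1 + 1) r = j.1 + 1 := by omega
          have e2 : min j.1 r = j.1 := by omega
          rw [e1, e2]
          push_cast
          linear_combination h2
        · rw [if_neg hjr]
          have e1 : min (j.1 + 1) r = r := by omega
          have e2 : min j.1 r = r := by omega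
          rw [e1, e2]
          linear_combination h2
    · -- top coordinate
      have hD1 : ∑ m : Fin (q + r),
          (if ¬ m.1 = 0 ∧ j.1 = m.1 - 1 then phiF p q r (Sum.inr m) x else 0) = 0 :=
        delta_sum_zero _ _ (fun m => by have := m.2; omega)
      have hj0 : ¬ j.1 = 0 := by omega
      have hD2 : ∑ m : Fin (q + r),
          (if ¬ m.1 = 0 ∧ j.1 = m.1 then -(phiF p q r (Sum.inr m) x) else 0)
            = -((if j.1 = 0 then 1 else ((min j.1 r : ℕ) : ℤ)) *
                (∑ l : Fin (p - 1), x (Sum.inl l))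
              + ∑ l : Fin (q + r), (if l.1 < j.1 then x (Sum.inr l) else 0)) := by
        rw [delta_sum (fun m => -(phiF p q r (Sum.inr m) x))
          (fun m => ¬ m.1 = 0 ∧ j.1 = m.1) j.1 (fun m => by omega) hj2]
        simp only [phiF, Fin.val_mk]
      rw [hD1, hD2, if_neg hj0, if_neg (show ¬ j.1 < r by omega)]
      have e2 : min j.1 r = r := by omega
      rw [e2]
      have ej : j.1 = q + r - 1 := by omega
      rw [ej]
      have h2 : (∑ l : Fin (q + r), x (Sum.inr l))
          - (∑ l : Fin (q + r), if l.1 < q + r - 1 then x (Sum.inr l) else 0)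
            = x (Sum.inr (⟨q + r - 1, by omega⟩ : Fin (q + r))) :=
        tele_low_all _ (by omega)
      have h3 : x (Sum.inr (⟨q + r - 1, by omega⟩ : Fin (q + r))) = x (Sum.inr j) :=
        congrArg x (congrArg Sum.inr (Fin.ext (by simp only [Fin.val_mk]; omega)))
      linear_combination -hx + h2 + h3

end Repr

/-- The `n` simple roots `β_1, …, β_{p−2}, α_0, α_1, …, α_{q+r−1}`
(here indexed by `Fin (p−2) ⊕ Fin (q+r)`, a type with `n = p+q+r−2` elements) form a
`ℤ`-basis of the root lattice `L_n = κ^⊥ ∩ Λ_n`: they are linearly independent and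
span `L_n` over `ℤ`. -/
theorem stmt_3 (p q r : ℕ) (hp : 2 ≤ p) (hq : 2 ≤ q) (hr : 3 ≤ r) :
    LinearIndependent ℤ (simpleRoot p q r) ∧
    Submodule.span ℤ (Set.range (simpleRoot p q r)) = Lsub p q r := by
  constructor
  · rw [Fintype.linearIndependent_iff]
    intro g hg s
    have h := congrArg (phiL p q r s) hg
    rw [map_sum, map_zero] at h
    simp only [map_smul, smul_eq_mul] at h
    rw [Finset.sum_congr rfl (fun t (_ : t ∈ Finset.univ) =>
      (show g t * phiL p q r s (simpleRoot p q r t) = if s = t then g t else 0 from by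
        rw [show phiL p q r s (simpleRoot p q r t) = phiF p q r s (simpleRoot p q r t) from rfl,
          phiF_root p q r hp hq hr]
        split_ifs <;> ring))] at h
    rwa [Finset.sum_ite_eq Finset.univ s g, if_pos (Finset.mem_univ s)] at h
  · apply le_antisymm
    · rw [Submodule.span_le]
      rintro y ⟨t, rfl⟩
      exact root_mem p q r hp hq hr t
    · intro y hy
      have hc := (mem_Lsub_iff p q r hp hr y).mp hy
      rw [← repr_sum p q r hp hq hr y hc]
      exact Submodule.sum_mem _ fun t _ =>
        Submodule.smul_mem _ _ (Submodule.subset_span ⟨t, rfl⟩)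
end

section
/- Let p = 2, write e_0 = h_1 and n = q + r. The product of simple reflections taken in the order r_{α_1} ∘ r_{α_2} ∘ ⋯ ∘ r_{α_{n−1}} ∘ r_{α_0} equals σ ∘ r_{I,1}, where σ is the automorphism of Λ_n fixing e_0 and cyclically permuting e_1 ↦ e_2 ↦ ⋯ ↦ e_n ↦ e_1, and r_{I,1} is the Cremona involution associated to α_{I,1} = e_0 − ∑_{i=1}^{r} e_i with I = {1, 2, …, r}. In particular this product is a Coxeter element of W(T_{2,q,r}). -/
open Finset

lemma bform_sub_right {R : Type*} [CommRing R] (p q r : ℕ) (x y z : Idx p q r → R) :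
    bform p q r x (y - z) = bform p q r x y - bform p q r x z := by
  simp [bform, Pi.sub_apply, mul_sub, sub_mul, Finset.sum_sub_distrib]
lemma bform_single (p q r : ℕ) (a b : Idx p q r) :
    bform p q r (fun k => if k = a then (1:ℤ) else 0) (fun k => if k = b then (1:ℤ) else 0)
      = gram p q r a b := by
  simp [bform, ite_mul, boole_mul, Finset.sum_ite_eq']
lemma bform_evec_evec (p q r : ℕ) (i j : Fin (q + r)) :
    bform p q r (evec p q r i) (evec p q r j) = if i = j then -1 else 0 := by
  rw [show evec p q r i = fun k => if k = Sum.inr i then (1:ℤ) else 0 from rfl,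
    show evec p q r j = fun k => if k = Sum.inr j then (1:ℤ) else 0 from rfl,
    bform_single]
  simp [gram, Sum.inr.injEq]
lemma bform_hvec_evec (p q r : ℕ) (i : Fin (p - 1)) (j : Fin (q + r)) :
    bform p q r (hvec p q r i) (evec p q r j) = 0 := by
  rw [show hvec p q r i = fun k => if k = Sum.inl i then (1:ℤ) else 0 from rfl,
    show evec p q r j = fun k => if k = Sum.inr j then (1:ℤ) else 0 from rfl,
    bform_single]
  rfl

lemma reflectL_apply (p q r : ℕ) (α x : Idx p q r → ℤ) :
    reflectL p q r α x = x + bform p q r x α • α := rfl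

lemma reflect_chain_evec (p q r : ℕ) (i j k : Fin (q + r)) (hij : i ≠ j) :
    reflectL p q r (evec p q r i - evec p q r j) (evec p q r k)
      = if k = i then evec p q r j else if k = j then evec p q r i else evec p q r k := by
  rw [reflectL_apply, bform_sub_right, bform_evec_evec, bform_evec_evec]
  by_cases hki : k = i
  · subst hki
    simp [hij, sub_smul, smul_sub]
  · by_cases hkj : k = j
    · subst hkj
      simp [hki, Ne.symm hij]
    · simp [hki, hkj]

lemma reflect_chain_hvec (p q r : ℕ) (i j : Fin (q + r)) (l : Fin (p - 1)) :
    reflectL p q r (evec p q r i - evec p q r j) (hvec p q r l) = hvec p q r l := by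
  rw [reflectL_apply, bform_sub_right, bform_hvec_evec, bform_hvec_evec]
  simp

lemma prod_fix {M : Type*} [AddCommGroup M] [Module ℤ M] (x : M) :
    ∀ l : List (Module.End ℤ M), (∀ g ∈ l, g x = x) → l.prod x = x := by
  intro l
  induction l with
  | nil => intro _; simp
  | cons g t ih =>
    intro h
    rw [List.prod_cons, Module.End.mul_apply, ih (fun g hg => h g (List.mem_cons_of_mem _ hg)),
      h g List.mem_cons_self]

lemma chain_drop_prod (q r : ℕ) (hr : 1 ≤ q + r) :
    ∀ (d m : ℕ) (_ : q + r - 1 - m = d) (_ : m ≤ q + r - 1) (k : Fin (q + r)),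
    (((List.finRange (q + r - 1)).map fun j =>
        reflectL 2 q r (evec 2 q r ⟨j.1, by have := j.isLt; omega⟩ -
          evec 2 q r ⟨j.1 + 1, by have := j.isLt; omega⟩)).drop m).prod (evec 2 q r k) =
      if k.1 < m then evec 2 q r k
      else if k.1 = q + r - 1 then evec 2 q r ⟨m, by omega⟩
      else evec 2 q r ⟨(k.1 + 1) % (q + r), Nat.mod_lt _ (by omega)⟩ := by
  intro d
  induction d with
  | zero =>
    intro m hd hm k
    have hmm : m = q + r - 1 := by omega
    subst hmm
    rw [List.drop_eq_nil_of_le (by simp), List.prod_nil]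
    by_cases h1 : k.1 < q + r - 1
    · rw [if_pos h1]; rfl
    · have h2 : k.1 = q + r - 1 := by have := k.isLt; omega
      rw [if_neg h1, if_pos h2]
      have : k = ⟨q + r - 1, by omega⟩ := Fin.ext h2
      rw [this]; rfl
  | succ d ih =>
    intro m hd hm k
    have hmlt : m < q + r - 1 := by omega
    rw [List.drop_eq_getElem_cons (by simp; omega), List.prod_cons, Module.End.mul_apply,
      ih (m + 1) (by omega) (by omega) k]
    simp only [List.getElem_map, List.getElem_finRange, Fin.coe_cast, Fin.val_mk]
    have hA : m < q + r := by omega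
    have hB : m + 1 < q + r := by omega
    have hne : (⟨m, hA⟩ : Fin (q + r)) ≠ ⟨m + 1, hB⟩ := Fin.ne_of_val_ne (show m ≠ m + 1 by omega)
    by_cases h1 : k.1 < m
    · have hlt : k.1 < m + 1 := by omega
      simp only [if_pos hlt, if_pos h1,
        reflect_chain_evec 2 q r ⟨m, hA⟩ ⟨m + 1, hB⟩ k hne]
      split_ifs with hc1 hc2
      · simp only [Fin.ext_iff, Fin.val_mk] at hc1; omega
      · simp only [Fin.ext_iff, Fin.val_mk] at hc2; omega
      · rfl
    · by_cases h2 : k.1 = m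
      · have hlt : k.1 < m + 1 := by omega
        simp only [if_pos hlt,
          reflect_chain_evec 2 q r ⟨m, hA⟩ ⟨m + 1, hB⟩ k hne,
          if_neg h1, if_neg (by omega : ¬ k.1 = q + r - 1)]
        split_ifs with hc1 hc2
        · refine congrArg _ (Fin.ext ?_)
          rw [Fin.val_mk, Fin.val_mk, Nat.mod_eq_of_lt (by omega : k.1 + 1 < q + r)]
          omega
        · simp only [Fin.ext_iff, Fin.val_mk] at hc2; omega
        · exact absurd (Fin.ext h2 : k = ⟨m, hA⟩) hc1
      · have hge : ¬ k.1 < m + 1 := by omega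
        by_cases h3 : k.1 = q + r - 1
        · simp only [if_neg hge, if_pos h3, if_neg h1,
            reflect_chain_evec 2 q r ⟨m, hA⟩ ⟨m + 1, hB⟩ ⟨m + 1, hB⟩ hne]
          split_ifs with hc1 hc2
          · simp only [Fin.ext_iff, Fin.val_mk] at hc1; omega
          · rfl
        · have hmod : (k.1 + 1) % (q + r) = k.1 + 1 :=
            Nat.mod_eq_of_lt (by have := k.isLt; omega)
          simp only [if_neg hge, if_neg h3, if_neg h1,
            reflect_chain_evec 2 q r ⟨m, hA⟩ ⟨m + 1, hB⟩
              ⟨(k.1 + 1) % (q + r), Nat.mod_lt _ (by omega)⟩ hne]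
          split_ifs with hc1 hc2
          · simp only [Fin.ext_iff, Fin.val_mk] at hc1; omega
          · simp only [Fin.ext_iff, Fin.val_mk] at hc2; omega
          · rfl

lemma single_eq_hvec (q r : ℕ) (i : Fin 1) :
    Pi.single (Sum.inl i : Idx 2 q r) (1 : ℤ) = hvec 2 q r i := by
  funext k
  simp [Pi.single_apply, hvec]

lemma single_eq_evec (q r : ℕ) (j : Fin (q + r)) :
    Pi.single (Sum.inr j : Idx 2 q r) (1 : ℤ) = evec 2 q r j := by
  funext k
  simp [Pi.single_apply, evec]

/-- Let `p = 2`, `e_0 = h_1`, `n = q + r`. The product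
`r_{α_1} ∘ r_{α_2} ∘ ⋯ ∘ r_{α_{n−1}} ∘ r_{α_0}` equals `σ ∘ r_{I,1}`, where `σ` is the
automorphism of `Λ_n` fixing `e_0` and cyclically permuting `e_1 ↦ e_2 ↦ ⋯ ↦ e_n ↦ e_1`,
and `r_{I,1}` is the Cremona involution associated with
`α_{I,1} = α_0 = e_0 − ∑_{i=1}^{r} e_i`, `I = {1, …, r}`. In particular this product is a
Coxeter element of `W(T_{2,q,r})`. -/
theorem stmt_8 (q r : ℕ) (hq : 2 ≤ q) (hr : 3 ≤ r)
    (σ : Module.End ℤ (Idx 2 q r → ℤ))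
    (hσ0 : σ (hvec 2 q r ⟨0, by omega⟩) = hvec 2 q r ⟨0, by omega⟩)
    (hσe : ∀ j : Fin (q + r),
      σ (evec 2 q r j) = evec 2 q r ⟨((j : ℕ) + 1) % (q + r), Nat.mod_lt _ (by omega)⟩) :
    (((List.finRange (q + r - 1)).map fun j =>
        reflectL 2 q r (evec 2 q r ⟨j.1, by have := j.isLt; omega⟩ -
          evec 2 q r ⟨j.1 + 1, by have := j.isLt; omega⟩)) ++
      [reflectL 2 q r (alpha0 2 q r)]).prod
      = σ * reflectL 2 q r (alpha0 2 q r) ∧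
    IsCoxeterElement 2 q r ((((List.finRange (q + r - 1)).map fun j =>
        reflectL 2 q r (evec 2 q r ⟨j.1, by have := j.isLt; omega⟩ -
          evec 2 q r ⟨j.1 + 1, by have := j.isLt; omega⟩)) ++
      [reflectL 2 q r (alpha0 2 q r)]).prod) := by
  have hn : 1 ≤ q + r := by omega
  have key : (((List.finRange (q + r - 1)).map fun j =>
      reflectL 2 q r (evec 2 q r ⟨j.1, by have := j.isLt; omega⟩ -
        evec 2 q r ⟨j.1 + 1, by have := j.isLt; omega⟩)).prod) = σ := by
    apply Module.Basis.ext (Pi.basisFun ℤ (Idx 2 q r))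
    intro i
    rw [Pi.basisFun_apply]
    cases i with
    | inl i0 =>
      have hi0 : i0 = (⟨0, by omega⟩ : Fin (2 - 1)) :=
        Fin.ext (by rw [Fin.val_mk]; have := i0.isLt; omega)
      rw [single_eq_hvec, hi0, hσ0]
      apply prod_fix
      intro g hg
      rw [List.mem_map] at hg
      obtain ⟨j, _, rfl⟩ := hg
      exact reflect_chain_hvec 2 q r _ _ _
    | inr j =>
      rw [single_eq_evec, hσe j]
      have hc := chain_drop_prod q r hn (q + r - 1) 0 (by omega) (by omega) j
      rw [List.drop_zero] at hc
      rw [hc, if_neg (by omega : ¬ (j : ℕ) < 0)]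
      by_cases h3 : (j : ℕ) = q + r - 1
      · rw [if_pos h3]
        refine congrArg _ (Fin.ext ?_)
        rw [Fin.val_mk, Fin.val_mk, h3, show q + r - 1 + 1 = q + r by omega,
          Nat.mod_self]
      · rw [if_neg h3]
  constructor
  · rw [List.prod_append, List.prod_cons, List.prod_nil, mul_one, key]
  · refine ⟨((List.finRange (q + r - 1)).map fun j =>
        (evec 2 q r ⟨j.1, by have := j.isLt; omega⟩ -
          evec 2 q r ⟨j.1 + 1, by have := j.isLt; omega⟩)) ++ [alpha0 2 q r], ?_, ?_, ?_⟩
    · rw [List.nodup_append]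
      refine ⟨?_, List.nodup_singleton _, ?_⟩
      · refine List.Nodup.map ?_ (List.nodup_finRange _)
        intro a b hab
        have h := congrFun hab (Sum.inr ⟨a.1, by have := a.isLt; omega⟩)
        simp only [Pi.sub_apply, evec, Sum.inr.injEq, Fin.mk.injEq] at h
        exact Fin.ext (by split_ifs at h <;> omega)
      · intro x hx y hy hx2
        rw [List.mem_map] at hx
        obtain ⟨j, _, rfl⟩ := hx
        rw [List.mem_singleton] at hy; subst hy
        have h := congrFun hx2 (Sum.inl ⟨0, by omega⟩)
        simp only [Pi.sub_apply, evec, alpha0] at h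
        simp at h
    · intro γ
      constructor
      · intro hγ
        rw [List.mem_append] at hγ
        rcases hγ with hγ | hγ
        · rw [List.mem_map] at hγ
          obtain ⟨j, _, rfl⟩ := hγ
          refine Or.inr (Or.inr ⟨⟨j.1, by have := j.isLt; omega⟩,
            ⟨j.1 + 1, by have := j.isLt; omega⟩, rfl, rfl⟩)
        · rw [List.mem_singleton] at hγ
          exact Or.inr (Or.inl hγ)
      · intro hγ
        rcases hγ with ⟨i, j, hij, _⟩ | hγ | ⟨i, j, hij, hγ⟩
        · exact absurd hij (by have := j.isLt; omega)
        · exact List.mem_append_right _ (by rw [List.mem_singleton]; exact hγ)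
        · refine List.mem_append_left _ ?_
          rw [List.mem_map]
          refine ⟨⟨i.1, by have := j.isLt; omega⟩, List.mem_finRange _, ?_⟩
          rw [hγ]
          congr 1 <;>
            exact congrArg _ (Fin.ext (by simp only [Fin.val_mk]; omega))
    · rw [List.map_append, List.map_map]
      rfl
end
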